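/- (Additivity of V_ℚ under connected sum along a d-simplex) Let K and K' be admissible d-complexes on disjoint finite vertex sets S and S', let F = [v₀,…,v_d] be a facet of K and F' = [v'₀,…,v'_d] a facet of K', and form the connected sum K # K' by identifying the vertices of F with those of F' so that F and F' become oppositely oriented copies of the same d-simplex, and deleting F and F' (so the chain of K # K' is the image of K + K' − F − F'); assume K # K' is an admissible d-complex. Then V_ℚ(K # K') = V_ℚ(K) + V_ℚ(K'). -/

import Mathlib

/-!
Framework: oriented simplicial chains on a finite vertex set.

An oriented `n`-simplex on a vertex set `V` is an `(n+1)`-tuple of distinct vertices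
up to even permutation; an odd permutation yields the oppositely oriented simplex.
An `n`-chain with coefficients in `R` is encoded as an *alternating* function
`c : (Fin (n+1) → V) → R`: the value `c f` is the coefficient of the oriented
simplex represented by the tuple `f`, and reversing orientation negates it.
-/

/-- `c` is an `n`-chain: it is alternating under permutations of the tuple
(so an oriented simplex and its orientation reversal are identified up to sign). -/
def IsAltChain {V : Type*} (n : ℕ) {R : Type*} [AddCommGroup R]
    (c : (Fin (n + 1) → V) → R) : Prop :=
  ∀ (σ : Equiv.Perm (Fin (n + 1))) (f : Fin (n + 1) → V),
    c (f ∘ σ) = (Equiv.Perm.sign σ : ℤ) • c f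

/-- The boundary operator: `∂` sends `[v₀,…,vₙ]` to `Σᵢ (−1)ⁱ [v₀,…,v̂ᵢ,…,vₙ]`;
in the alternating-function encoding this is `(∂c) g = Σ_{v} c (v ∷ g)`. -/
def bdry {V : Type*} [Fintype V] {n : ℕ} {R : Type*} [AddCommMonoid R]
    (c : (Fin (n + 1) → V) → R) : (Fin n → V) → R :=
  fun g => ∑ v : V, c (Fin.cons v g)

/-- 1-norm of an integral chain: sum of the absolute values of the coefficients,
one per oriented simplex (each simplex has `(n+1)!` tuple representatives). -/
noncomputable def normZ {V : Type*} [Fintype V] [DecidableEq V] {n : ℕ}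
    (c : (Fin (n + 1) → V) → ℤ) : ℝ :=
  (∑ f : Fin (n + 1) → V, |(c f : ℝ)|) / (Nat.factorial (n + 1) : ℝ)

/-- 1-norm of a rational chain. -/
noncomputable def normQ {V : Type*} [Fintype V] [DecidableEq V] {n : ℕ}
    (c : (Fin (n + 1) → V) → ℚ) : ℝ :=
  (∑ f : Fin (n + 1) → V, |(c f : ℝ)|) / (Nat.factorial (n + 1) : ℝ)

/-- An admissible `d`-complex on `V`: an integral `d`-chain in which every oriented
`d`-simplex appears with coefficient `0` or `1` (i.e. every tuple has coefficient
`-1`, `0` or `1`), and whose boundary vanishes. Its *facets* are the oriented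
simplices (tuples) with coefficient `1`. -/
structure IsAdmissible {V : Type*} [Fintype V] (d : ℕ)
    (K : (Fin (d + 1) → V) → ℤ) : Prop where
  chain : IsAltChain d K
  coeff : ∀ f, K f = -1 ∨ K f = 0 ∨ K f = 1
  closed : ∀ g, bdry K g = 0

/-- `V_ℤ(K)`: the minimum 1-norm of an integral `(d+1)`-chain `α` with `∂α = K`
(the minimum is attained, so it equals this infimum). -/
noncomputable def VZ {V : Type*} [Fintype V] [DecidableEq V] (d : ℕ)
    (K : (Fin (d + 1) → V) → ℤ) : ℝ :=
  sInf { x : ℝ | ∃ α : (Fin (d + 2) → V) → ℤ,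
    IsAltChain (d + 1) α ∧ (∀ g, bdry α g = K g) ∧ x = normZ α }

/-- `V_ℚ(K)`: the minimum 1-norm of a rational `(d+1)`-chain `α` with `∂α = K`
(the minimum is attained, so it equals this infimum). -/
noncomputable def VQ {V : Type*} [Fintype V] [DecidableEq V] (d : ℕ)
    (K : (Fin (d + 1) → V) → ℤ) : ℝ :=
  sInf { x : ℝ | ∃ α : (Fin (d + 2) → V) → ℚ,
    IsAltChain (d + 1) α ∧ (∀ g, bdry α g = (K g : ℚ)) ∧ x = normQ α }

/-- The unit-flux constraint: for every oriented `(d+1)`-simplex `t` on `V`,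
the total flux through its oriented boundary facets is at most `1`. -/
def UnitFlux {V : Type*} (d : ℕ) (φ : (Fin (d + 1) → V) → ℝ) : Prop :=
  ∀ t : Fin (d + 2) → V, Function.Injective t →
    ∑ i : Fin (d + 2), (-1 : ℝ) ^ (i : ℕ) * φ (t ∘ i.succAbove) ≤ 1

/-- `φ(F₁) + ⋯ + φ(Fₙ)`, the sum of a flux function over the facets of `K`
(each facet has `(d+1)!` tuple representatives `f`, on which `K f * φ f` agree). -/
noncomputable def fluxSum {V : Type*} [Fintype V] (d : ℕ)
    (φ : (Fin (d + 1) → V) → ℝ) (K : (Fin (d + 1) → V) → ℤ) : ℝ :=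
  (∑ f : Fin (d + 1) → V, (K f : ℝ) * φ f) / (Nat.factorial (d + 1) : ℝ)

/-- Pushforward of a chain along a map of vertex sets `q : V → W`
(simplices whose image is degenerate die). -/
def pushChain {V W : Type*} [Fintype V] [DecidableEq W] (q : V → W) {n : ℕ}
    {R : Type*} [AddCommMonoid R] (c : (Fin n → V) → R) : (Fin n → W) → R :=
  fun f => ∑ g : Fin n → V, if q ∘ g = f then c g else 0

/-- The chain consisting of the single oriented simplex `[s 0, …, s n]`. -/
def simplexChain {V : Type*} [DecidableEq V] {n : ℕ} (s : Fin (n + 1) → V) :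
    (Fin (n + 1) → V) → ℤ :=
  fun f => ∑ σ : Equiv.Perm (Fin (n + 1)),
    if f = s ∘ σ then (Equiv.Perm.sign σ : ℤ) else 0

/-- The chain of the disjoint union `K ⊔ K'` on `V ⊕ V'`: it is `K + K'`. -/
def unionChain {V V' : Type*} [Fintype V] [Fintype V'] [DecidableEq V] [DecidableEq V']
    {n : ℕ} (K : (Fin n → V) → ℤ) (K' : (Fin n → V') → ℤ) : (Fin n → V ⊕ V') → ℤ :=
  fun f => pushChain Sum.inl K f + pushChain Sum.inr K' f

/-- The chain of the connected sum `K # K'` on the glued vertex set `W`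
(with gluing maps `j : V → W`, `j' : V' → W` identifying the facet `vF` of `K`
with the facet `vF'` of `K'`): the image of `K + K' − F − F'` under the gluing. -/
def connSum {V V' W : Type*} [Fintype V] [Fintype V'] [DecidableEq V] [DecidableEq V']
    [DecidableEq W] {d : ℕ} (K : (Fin (d + 1) → V) → ℤ) (K' : (Fin (d + 1) → V') → ℤ)
    (vF : Fin (d + 1) → V) (vF' : Fin (d + 1) → V') (j : V → W) (j' : V' → W) :
    (Fin (d + 1) → W) → ℤ :=
  pushChain (Sum.elim j j')
    (fun g : Fin (d + 1) → V ⊕ V' =>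
      pushChain Sum.inl K g + pushChain Sum.inr K' g
        - pushChain Sum.inl (simplexChain vF) g - pushChain Sum.inr (simplexChain vF') g)

section AuxBasic

variable {V W X : Type*} {R : Type*}

lemma IsAltChain.eq_zero_of_not_injective [AddCommGroup R] [NoZeroSMulDivisors ℤ R]
    {n : ℕ} {c : (Fin (n + 1) → V) → R} (hc : IsAltChain n c)
    {f : Fin (n + 1) → V} (hf : ¬ Function.Injective f) : c f = 0 := by
  simp only [Function.Injective, not_forall] at hf
  obtain ⟨p, q, hpq, hne⟩ := hf
  have h := hc (Equiv.swap p q) f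
  have hfs : f ∘ (Equiv.swap p q) = f := by
    funext x
    simp only [Function.comp_apply, Equiv.swap_apply_def]
    split_ifs with h1 h2 <;> simp_all
  rw [hfs, Equiv.Perm.sign_swap hne] at h
  have h2 : (2 : ℤ) • c f = 0 := by
    have hcf : c f = - c f := by simpa using h
    rw [two_smul]
    nth_rewrite 1 [hcf]
    simp
  rcases smul_eq_zero.1 h2 with h3 | h3
  · exact absurd h3 (by norm_num)
  · exact h3

/-- Pushforward preserves alternation. -/
lemma isAltChain_pushChain [AddCommGroup R] [Fintype V] [DecidableEq W]
    {n : ℕ} {c : (Fin (n + 1) → V) → R} (hc : IsAltChain n c) (q : V → W) :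
    IsAltChain n (pushChain q c) := by
  intro σ f
  unfold pushChain
  have hsq : ∀ x : R, (Equiv.Perm.sign σ : ℤ) • (Equiv.Perm.sign σ : ℤ) • x = x := by
    intro x
    rw [smul_smul]
    have : ((Equiv.Perm.sign σ : ℤ)) * ((Equiv.Perm.sign σ : ℤ))
        = (((Equiv.Perm.sign σ * Equiv.Perm.sign σ : ℤˣ)) : ℤ) := by push_cast; ring
    rw [this, Int.units_mul_self]
    simp
  have key : ∀ g : Fin (n+1) → V, (if q ∘ g = f ∘ σ then c g else 0)
      = (Equiv.Perm.sign σ : ℤ) • (if q ∘ (g ∘ σ.symm) = f then c (g ∘ σ.symm) else 0) := by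
    intro g
    have hcond : (q ∘ (g ∘ σ.symm) = f) ↔ (q ∘ g = f ∘ σ) := by
      constructor
      · intro h; funext x
        have := congrFun h (σ x); simpa using this
      · intro h; funext x
        have := congrFun h (σ.symm x); simpa using this
    have hval : c (g ∘ σ.symm) = (Equiv.Perm.sign σ : ℤ) • c g := by
      have := hc σ⁻¹ g
      simpa using this
    by_cases h : q ∘ g = f ∘ σ
    · rw [if_pos h, if_pos (hcond.2 h), hval, hsq]
    · rw [if_neg h, if_neg (fun hh => h (hcond.1 hh)), smul_zero]
  calc (∑ g : Fin (n+1) → V, if q ∘ g = f ∘ σ then c g else 0)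
      = ∑ g : Fin (n+1) → V, (Equiv.Perm.sign σ : ℤ) • (if q ∘ (g ∘ σ.symm) = f then c (g ∘ σ.symm) else 0) :=
        Finset.sum_congr rfl fun g _ => key g
    _ = ∑ g : Fin (n+1) → V, (Equiv.Perm.sign σ : ℤ) • (if q ∘ g = f then c g else 0) := by
        refine Fintype.sum_bijective (fun g => g ∘ σ.symm) ?_ _ _ (fun g => rfl)
        exact ⟨fun a b hab => by
            funext x
            have := congrFun hab (σ x); simpa using this,
          fun g => ⟨g ∘ σ, by funext x; simp⟩⟩
    _ = (Equiv.Perm.sign σ : ℤ) • ∑ g : Fin (n+1) → V, (if q ∘ g = f then c g else 0) :=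
        (Finset.smul_sum).symm

/-- Pushforward commutes with the boundary operator. -/
lemma bdry_pushChain [AddCommMonoid R] [Fintype V] [Fintype W] [DecidableEq W]
    {n : ℕ} (q : V → W) (c : (Fin (n + 1) → V) → R) (g : Fin n → W) :
    bdry (pushChain q c) g = pushChain q (bdry c) g := by
  unfold bdry pushChain
  -- LHS = Σ_w Σ_h [q∘h = cons w g] c h
  have lhs : ∑ w : W, ∑ h : Fin (n+1) → V, (if q ∘ h = Fin.cons w g then c h else 0)
      = ∑ h : Fin (n+1) → V, (if q ∘ (Fin.tail h) = g then c h else 0) := by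
    rw [Finset.sum_comm]
    refine Finset.sum_congr rfl fun h _ => ?_
    rw [Finset.sum_eq_single (q (h 0))]
    · congr 1
      · simp only [eq_iff_iff]
        constructor
        · intro he
          funext x
          have := congrFun he x.succ
          simpa [Fin.tail] using this
        · intro he
          funext x
          refine Fin.cases ?_ (fun y => ?_) x
          · simp
          · have := congrFun he y
            simpa [Fin.tail] using this
    · intro w _ hw
      rw [if_neg]
      intro he
      apply hw
      have := congrFun he 0
      simpa using this.symm
    · intro h0; exact absurd (Finset.mem_univ _) h0
  rw [lhs]
  -- RHS = Σ_{g'} [q∘g' = g] Σ_v c (cons v g')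
  rw [show (∑ g' : Fin n → V, if q ∘ g' = g then (∑ v : V, c (Fin.cons v g')) else 0)
      = ∑ g' : Fin n → V, ∑ v : V, (if q ∘ g' = g then c (Fin.cons v g') else 0) by
    refine Finset.sum_congr rfl fun g' _ => ?_
    split_ifs with h
    · rfl
    · simp]
  rw [Finset.sum_comm, ← Finset.sum_product']
  refine Fintype.sum_bijective (fun h => ((h 0, Fin.tail h) : V × (Fin n → V))) ?_ _ _ ?_
  · constructor
    · intro a b hab
      simp only [Prod.mk.injEq] at hab
      funext x
      refine Fin.cases ?_ (fun y => ?_) x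
      · exact hab.1
      · exact congrFun hab.2 y
    · rintro ⟨v, g'⟩
      exact ⟨Fin.cons v g', by simp [Fin.tail_cons]⟩
  · intro h
    simp [Fin.cons_self_tail]

lemma pushChain_comp [AddCommMonoid R] [Fintype V] [Fintype W] [DecidableEq W] [DecidableEq X]
    {n : ℕ} (q : W → X) (p : V → W) (c : (Fin n → V) → R) (f : Fin n → X) :
    pushChain q (pushChain p c) f = pushChain (q ∘ p) c f := by
  unfold pushChain
  rw [show (∑ g : Fin n → W, if q ∘ g = f then (∑ h : Fin n → V, if p ∘ h = g then c h else 0) else 0)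
      = ∑ g : Fin n → W, ∑ h : Fin n → V, (if p ∘ h = g then (if q ∘ g = f then c h else 0) else 0) by
    refine Finset.sum_congr rfl fun g _ => ?_
    split_ifs with h
    · refine Finset.sum_congr rfl fun h' _ => ?_
      split_ifs <;> simp_all
    · simp]
  rw [Finset.sum_comm]
  refine Finset.sum_congr rfl fun h _ => ?_
  rw [Finset.sum_eq_single (p ∘ h)]
  · have hassoc : q ∘ (p ∘ h) = (q ∘ p) ∘ h := rfl
    simp [hassoc]
  · intro g _ hg
    rw [if_neg (fun he => hg he.symm)]
  · intro h0; exact absurd (Finset.mem_univ _) h0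

lemma pushChain_id [AddCommMonoid R] [Fintype V] [DecidableEq V]
    {n : ℕ} (c : (Fin n → V) → R) (f : Fin n → V) :
    pushChain id c f = c f := by
  unfold pushChain
  rw [Finset.sum_eq_single f]
  · simp
  · intro g _ hg
    rw [if_neg (by simpa using hg)]
  · intro h0; exact absurd (Finset.mem_univ _) h0

lemma pushChain_add [AddCommMonoid R] [Fintype V] [DecidableEq W]
    {n : ℕ} (q : V → W) (c c' : (Fin n → V) → R) (f : Fin n → W) :
    pushChain q (fun g => c g + c' g) f = pushChain q c f + pushChain q c' f := by
  unfold pushChain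
  rw [← Finset.sum_add_distrib]
  refine Finset.sum_congr rfl fun g _ => ?_
  split_ifs <;> simp

lemma pushChain_sub [AddCommGroup R] [Fintype V] [DecidableEq W]
    {n : ℕ} (q : V → W) (c c' : (Fin n → V) → R) (f : Fin n → W) :
    pushChain q (fun g => c g - c' g) f = pushChain q c f - pushChain q c' f := by
  unfold pushChain
  rw [← Finset.sum_sub_distrib]
  refine Finset.sum_congr rfl fun g _ => ?_
  split_ifs <;> simp

lemma pushChain_intCast [Fintype V] [DecidableEq W]
    {n : ℕ} (q : V → W) (c : (Fin n → V) → ℤ) (f : Fin n → W) :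
    pushChain q (fun g => ((c g : ℤ) : ℚ)) f = ((pushChain q c f : ℤ) : ℚ) := by
  unfold pushChain
  push_cast
  refine Finset.sum_congr rfl fun g _ => ?_
  split_ifs <;> simp

/-- `simplexChain` is alternating. -/
lemma simplexChain_alt [DecidableEq V] {n : ℕ} (s : Fin (n + 1) → V) :
    IsAltChain n (simplexChain s) := by
  intro σ f
  unfold simplexChain
  rw [Finset.smul_sum]
  refine Fintype.sum_bijective (fun τ => τ * σ⁻¹) (Group.mulRight_bijective σ⁻¹) _ _ ?_
  intro τ
  have hcond : (f ∘ σ = s ∘ τ) ↔ (f = s ∘ (τ * σ⁻¹)) := by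
    constructor
    · intro h; funext x
      have := congrFun h (σ⁻¹ x)
      simpa [Equiv.Perm.mul_apply] using this
    · intro h; funext x
      have := congrFun h (σ x)
      simpa [Equiv.Perm.mul_apply] using this
  by_cases h : f ∘ σ = s ∘ τ
  · rw [if_pos h, if_pos (hcond.1 h)]
    rw [Equiv.Perm.sign_mul, Equiv.Perm.sign_inv]
    push_cast
    rcases Int.units_eq_one_or (Equiv.Perm.sign σ) with hs | hs <;>
      rcases Int.units_eq_one_or (Equiv.Perm.sign τ) with ht | ht <;>
        simp [hs, ht]
  · rw [if_neg h, if_neg (fun hh => h (hcond.2 hh)), smul_zero]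

lemma pushChain_simplexChain [Fintype V] [DecidableEq V] [DecidableEq W]
    {n : ℕ} (q : V → W) (s : Fin (n + 1) → V) (f : Fin (n + 1) → W) :
    pushChain q (simplexChain s) f = simplexChain (q ∘ s) f := by
  unfold pushChain simplexChain
  rw [show (∑ g : Fin (n+1) → V, if q ∘ g = f then
        (∑ σ : Equiv.Perm (Fin (n+1)), if g = s ∘ σ then (Equiv.Perm.sign σ : ℤ) else 0) else 0)
      = ∑ g : Fin (n+1) → V, ∑ σ : Equiv.Perm (Fin (n+1)),
          (if g = s ∘ σ then (if q ∘ g = f then (Equiv.Perm.sign σ : ℤ) else 0) else 0) by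
    refine Finset.sum_congr rfl fun g _ => ?_
    split_ifs with h
    · rfl
    · simp]
  rw [Finset.sum_comm]
  refine Finset.sum_congr rfl fun σ _ => ?_
  rw [Finset.sum_eq_single (s ∘ σ)]
  · rw [if_pos rfl]
    have hassoc : q ∘ (s ∘ ⇑σ) = (q ∘ s) ∘ ⇑σ := rfl
    rw [hassoc]
    by_cases h : (q ∘ s) ∘ ⇑σ = f
    · rw [if_pos h, if_pos h.symm]
    · rw [if_neg h, if_neg (fun hh => h hh.symm)]
  · intro g _ hg
    rw [if_neg hg]
  · intro h0; exact absurd (Finset.mem_univ _) h0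

lemma simplexChain_comp_perm [DecidableEq V] {n : ℕ} (s : Fin (n + 1) → V)
    (ρ : Equiv.Perm (Fin (n + 1))) (f : Fin (n + 1) → V) :
    simplexChain (s ∘ ρ) f = (Equiv.Perm.sign ρ : ℤ) * simplexChain s f := by
  unfold simplexChain
  have hss : ((Equiv.Perm.sign ρ : ℤ)) * ((Equiv.Perm.sign ρ : ℤ)) = 1 := by
    have : ((Equiv.Perm.sign ρ : ℤ)) * ((Equiv.Perm.sign ρ : ℤ))
        = (((Equiv.Perm.sign ρ * Equiv.Perm.sign ρ : ℤˣ)) : ℤ) := by push_cast; ring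
    rw [this, Int.units_mul_self]; rfl
  have key : ∀ τ : Equiv.Perm (Fin (n+1)),
      (if f = (s ∘ ⇑ρ) ∘ ⇑τ then (Equiv.Perm.sign τ : ℤ) else 0)
      = (Equiv.Perm.sign ρ : ℤ) * (if f = s ∘ ⇑(ρ * τ) then (Equiv.Perm.sign (ρ * τ) : ℤ) else 0) := by
    intro τ
    have hcomp : s ∘ ⇑(ρ * τ) = (s ∘ ⇑ρ) ∘ ⇑τ := by
      funext x; simp [Equiv.Perm.mul_apply]
    rw [hcomp]
    by_cases h : f = (s ∘ ⇑ρ) ∘ ⇑τ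
    · rw [if_pos h, if_pos h, Equiv.Perm.sign_mul]
      push_cast
      rw [← mul_assoc, hss, one_mul]
    · rw [if_neg h, if_neg h, mul_zero]
  calc (∑ τ : Equiv.Perm (Fin (n+1)), if f = (s ∘ ⇑ρ) ∘ ⇑τ then (Equiv.Perm.sign τ : ℤ) else 0)
      = ∑ τ : Equiv.Perm (Fin (n+1)),
          (Equiv.Perm.sign ρ : ℤ) * (if f = s ∘ ⇑(ρ * τ) then (Equiv.Perm.sign (ρ * τ) : ℤ) else 0) :=
        Finset.sum_congr rfl fun τ _ => key τ
    _ = ∑ τ : Equiv.Perm (Fin (n+1)),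
          (Equiv.Perm.sign ρ : ℤ) * (if f = s ∘ ⇑τ then (Equiv.Perm.sign τ : ℤ) else 0) := by
        refine Fintype.sum_bijective (fun τ => ρ * τ) (Group.mulLeft_bijective ρ) _ _ (fun τ => rfl)
    _ = (Equiv.Perm.sign ρ : ℤ) * ∑ τ : Equiv.Perm (Fin (n+1)),
          (if f = s ∘ ⇑τ then (Equiv.Perm.sign τ : ℤ) else 0) := (Finset.mul_sum _ _ _).symm

end AuxBasic

section AuxCone

open Equiv Equiv.Perm

variable {V : Type*}

/-- The permutation sending `0 ↦ i` and `x.succ ↦ i.succAbove (e x)`. -/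
def permE {n : ℕ} (i : Fin (n + 1)) (e : Perm (Fin n)) : Perm (Fin (n + 1)) :=
  (i.cycleRange)⁻¹ * Equiv.Perm.decomposeFin.symm (0, e)

lemma permE_zero {n : ℕ} (i : Fin (n + 1)) (e : Perm (Fin n)) : permE i e 0 = i := by
  unfold permE
  rw [Equiv.Perm.mul_apply, Equiv.Perm.decomposeFin_symm_apply_zero]
  rw [Equiv.Perm.inv_def, Equiv.symm_apply_eq, Fin.cycleRange_self]

lemma permE_succ {n : ℕ} (i : Fin (n + 1)) (e : Perm (Fin n)) (x : Fin n) :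
    permE i e x.succ = i.succAbove (e x) := by
  unfold permE
  rw [Equiv.Perm.mul_apply, Equiv.Perm.decomposeFin_symm_apply_succ]
  simp only [Equiv.swap_self, Equiv.refl_apply]
  rw [Equiv.Perm.inv_def, Equiv.symm_apply_eq, Fin.cycleRange_succAbove]

lemma permE_sign {n : ℕ} (i : Fin (n + 1)) (e : Perm (Fin n)) :
    Equiv.Perm.sign (permE i e) = (-1) ^ (i : ℕ) * Equiv.Perm.sign e := by
  unfold permE
  rw [Equiv.Perm.sign_mul, Equiv.Perm.sign_inv, Fin.sign_cycleRange,
    Equiv.Perm.decomposeFin.symm_sign, if_pos rfl, one_mul]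

lemma permE_bijective {n : ℕ} :
    Function.Bijective (fun p : Fin (n + 1) × Perm (Fin n) => permE p.1 p.2) := by
  constructor
  · rintro ⟨i, e⟩ ⟨i', e'⟩ h
    simp only at h
    have hi : i = i' := by rw [← permE_zero i e, ← permE_zero i' e', h]
    subst hi
    have he : Equiv.Perm.decomposeFin.symm (0, e) = Equiv.Perm.decomposeFin.symm (0, e') := by
      have := mul_left_cancel (a := (i.cycleRange)⁻¹)
        (b := Equiv.Perm.decomposeFin.symm (0, e)) (c := Equiv.Perm.decomposeFin.symm (0, e'))
      exact this h
    have := Equiv.Perm.decomposeFin.symm.injective he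
    simp only [Prod.mk.injEq] at this
    rw [this.2]
  · intro τ
    refine ⟨⟨τ 0, (Equiv.Perm.decomposeFin ((τ 0).cycleRange * τ)).2⟩, ?_⟩
    simp only
    unfold permE
    have h0 : ((τ 0).cycleRange * τ) 0 = 0 := by
      rw [Equiv.Perm.mul_apply, Fin.cycleRange_self]
    have hdec : Equiv.Perm.decomposeFin.symm (Equiv.Perm.decomposeFin ((τ 0).cycleRange * τ)) =
        (τ 0).cycleRange * τ := Equiv.symm_apply_apply _ _
    have hfst : (Equiv.Perm.decomposeFin ((τ 0).cycleRange * τ)).1 = 0 := by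
      have := Equiv.Perm.decomposeFin_symm_apply_zero
        (Equiv.Perm.decomposeFin ((τ 0).cycleRange * τ)).1
        (Equiv.Perm.decomposeFin ((τ 0).cycleRange * τ)).2
      rw [Prod.mk.eta, hdec] at this
      rw [← this, h0]
    have hpair : ((0 : Fin (n+1)), (Equiv.Perm.decomposeFin ((τ 0).cycleRange * τ)).2)
        = Equiv.Perm.decomposeFin ((τ 0).cycleRange * τ) := Prod.ext hfst.symm rfl
    rw [hpair, Equiv.symm_apply_apply, ← mul_assoc, inv_mul_cancel, one_mul]

/-- Sum over permutations of `Fin (n+1)` decomposed by the image of `0`. -/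
lemma sum_perm_decompose {n : ℕ} {M : Type*} [AddCommMonoid M] (F : Perm (Fin (n + 1)) → M) :
    ∑ τ : Perm (Fin (n + 1)), F τ = ∑ i : Fin (n + 1), ∑ e : Perm (Fin n), F (permE i e) := by
  rw [← Finset.sum_product']
  exact (Fintype.sum_bijective _ permE_bijective _ _ (fun p => rfl)).symm

/-- The cone over a chain with apex `v₀`. -/
noncomputable def coneFill [Fintype V] [DecidableEq V] {d : ℕ} (v₀ : V)
    (K : (Fin (d + 1) → V) → ℤ) : (Fin (d + 2) → V) → ℚ :=
  fun t => (∑ w : Fin (d + 1) → V, (K w : ℚ) * ((simplexChain (Fin.cons v₀ w) t : ℤ) : ℚ))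
    / (Nat.factorial (d + 1) : ℚ)

lemma coneFill_alt [Fintype V] [DecidableEq V] {d : ℕ} (v₀ : V)
    (K : (Fin (d + 1) → V) → ℤ) : IsAltChain (d + 1) (coneFill v₀ K) := by
  intro σ t
  unfold coneFill
  have key : ∀ w : Fin (d+1) → V,
      (K w : ℚ) * ((simplexChain (Fin.cons v₀ w) (t ∘ σ) : ℤ) : ℚ)
      = ((Equiv.Perm.sign σ : ℤ) : ℚ) * ((K w : ℚ) * ((simplexChain (Fin.cons v₀ w) t : ℤ) : ℚ)) := by
    intro w
    rw [simplexChain_alt (Fin.cons v₀ w) σ t, zsmul_eq_mul]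
    push_cast
    ring
  rw [Finset.sum_congr rfl (fun w _ => key w), ← Finset.mul_sum, mul_div_assoc, zsmul_eq_mul]

lemma bdry_coneFill [Fintype V] [DecidableEq V] {d : ℕ} (v₀ : V)
    (K : (Fin (d + 1) → V) → ℤ) (hK : IsAltChain d K) (hcl : ∀ g, bdry K g = 0)
    (g : Fin (d + 1) → V) : bdry (coneFill v₀ K) g = (K g : ℚ) := by
  classical
  unfold bdry coneFill
  rw [← Finset.sum_div]
  rw [div_eq_iff (by positivity : (Nat.factorial (d+1) : ℚ) ≠ 0)]
  -- expand simplexChain and push the coefficient inside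
  have step1 : ∀ v : V, (∑ w : Fin (d+1) → V,
        (K w : ℚ) * ((simplexChain (Fin.cons v₀ w) (Fin.cons v g : Fin (d + 2) → V) : ℤ) : ℚ))
      = ∑ τ : Perm (Fin (d + 2)),
          (if (Fin.cons v g : Fin (d + 2) → V) (τ 0) = v₀
            then (K (fun k => (Fin.cons v g : Fin (d + 2) → V) (τ k.succ)) : ℚ) * ((Equiv.Perm.sign τ : ℤ) : ℚ)
            else 0) := by
    intro v
    unfold simplexChain
    have expand : ∀ w : Fin (d+1) → V,
        (K w : ℚ) * (((∑ σ : Perm (Fin (d+2)),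
            if Fin.cons v g = Fin.cons v₀ w ∘ σ then (Equiv.Perm.sign σ : ℤ) else 0) : ℤ) : ℚ)
        = ∑ σ : Perm (Fin (d+2)),
            (if Fin.cons v g = Fin.cons v₀ w ∘ σ then (K w : ℚ) * ((Equiv.Perm.sign σ : ℤ) : ℚ) else 0) := by
      intro w
      push_cast
      rw [Finset.mul_sum]
      refine Finset.sum_congr rfl fun σ _ => ?_
      split_ifs <;> simp
    rw [Finset.sum_congr rfl (fun w _ => expand w), Finset.sum_comm]
    -- now reindex σ ↦ σ⁻¹ and collapse the w-sum
    have inner : ∀ σ : Perm (Fin (d + 2)),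
        (∑ w : Fin (d+1) → V,
          if Fin.cons v g = Fin.cons v₀ w ∘ σ then (K w : ℚ) * ((Equiv.Perm.sign σ : ℤ) : ℚ) else 0)
        = (if (Fin.cons v g : Fin (d + 2) → V) (σ⁻¹ 0) = v₀
            then (K (fun k => (Fin.cons v g : Fin (d + 2) → V) (σ⁻¹ k.succ)) : ℚ) * ((Equiv.Perm.sign σ : ℤ) : ℚ)
            else 0) := by
      intro σ
      rw [Finset.sum_eq_single (fun k => (Fin.cons v g : Fin (d + 2) → V) (σ⁻¹ k.succ))]
      · by_cases hc : (Fin.cons v g : Fin (d + 2) → V) (σ⁻¹ 0) = v₀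
        · rw [if_pos hc, if_pos]
          funext x
          have hx : x = σ⁻¹ (σ x) := by simp
          rcases Fin.eq_zero_or_eq_succ (σ x) with h0 | ⟨k, hk⟩
          · rw [hx, h0]
            simpa [h0] using hc
          · rw [hx, hk]
            simp [hk, Function.comp_apply]
        · rw [if_neg hc, if_neg]
          intro he
          apply hc
          have := congrFun he (σ⁻¹ 0)
          simpa using this
      · intro w _ hw
        rw [if_neg]
        intro he
        apply hw
        funext k
        have := congrFun he (σ⁻¹ k.succ)
        simpa using this.symm
      · intro h0; exact absurd (Finset.mem_univ _) h0
    rw [Finset.sum_congr rfl (fun σ _ => inner σ)]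
    refine Fintype.sum_bijective (fun σ => σ⁻¹) ⟨fun a b h => by simpa using congrArg (·⁻¹) h,
      fun σ => ⟨σ⁻¹, by simp⟩⟩ _ _ ?_
    intro σ
    rw [Equiv.Perm.sign_inv]
  rw [Finset.sum_congr rfl (fun v _ => step1 v)]
  -- decompose permutations
  have step2 : ∀ v : V, (∑ τ : Perm (Fin (d + 2)),
        (if (Fin.cons v g : Fin (d + 2) → V) (τ 0) = v₀
          then (K (fun k => (Fin.cons v g : Fin (d + 2) → V) (τ k.succ)) : ℚ) * ((Equiv.Perm.sign τ : ℤ) : ℚ)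
          else 0))
      = ∑ i : Fin (d + 2),
          (if (Fin.cons v g : Fin (d + 2) → V) i = v₀
            then (Nat.factorial (d+1) : ℚ) * ((-1 : ℚ) ^ (i : ℕ) * (K ((Fin.cons v g : Fin (d + 2) → V) ∘ i.succAbove) : ℚ))
            else 0) := by
    intro v
    rw [sum_perm_decompose]
    refine Finset.sum_congr rfl fun i _ => ?_
    have term : ∀ e : Perm (Fin (d + 1)),
        (if (Fin.cons v g : Fin (d + 2) → V) (permE i e 0) = v₀
          then (K (fun k => (Fin.cons v g : Fin (d + 2) → V) (permE i e k.succ)) : ℚ) * ((Equiv.Perm.sign (permE i e) : ℤ) : ℚ)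
          else 0)
        = (if (Fin.cons v g : Fin (d + 2) → V) i = v₀
            then (-1 : ℚ) ^ (i : ℕ) * (K ((Fin.cons v g : Fin (d + 2) → V) ∘ i.succAbove) : ℚ)
            else 0) := by
      intro e
      rw [permE_zero]
      by_cases hc : (Fin.cons v g : Fin (d + 2) → V) i = v₀
      · rw [if_pos hc, if_pos hc]
        have harg : (fun k => (Fin.cons v g : Fin (d + 2) → V) (permE i e k.succ))
            = ((Fin.cons v g : Fin (d + 2) → V) ∘ i.succAbove) ∘ e := by
          funext k
          rw [permE_succ]
          rfl
        rw [harg, hK e ((Fin.cons v g : Fin (d + 2) → V) ∘ i.succAbove), permE_sign]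
        rcases Int.units_eq_one_or (Equiv.Perm.sign e) with hs | hs
        · rw [hs]
          simp only [one_smul, Units.val_one, Int.cast_one]
          push_cast
          ring
        · rw [hs]
          simp only [neg_smul, one_smul, Units.val_neg, Units.val_one]
          push_cast
          ring
      · rw [if_neg hc, if_neg hc]
    rw [Finset.sum_congr rfl (fun e _ => term e)]
    rw [Finset.sum_const, Finset.card_univ, Fintype.card_perm, Fintype.card_fin]
    split_ifs
    · rw [nsmul_eq_mul]
    · simp
  rw [Finset.sum_congr rfl (fun v _ => step2 v)]
  -- now evaluate the sum over v and i
  have step3 : ∀ v : V, (∑ i : Fin (d + 2),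
        (if (Fin.cons v g : Fin (d + 2) → V) i = v₀
          then (Nat.factorial (d+1) : ℚ) * ((-1 : ℚ) ^ (i : ℕ) * (K ((Fin.cons v g : Fin (d + 2) → V) ∘ i.succAbove) : ℚ))
          else 0))
      = (if v = v₀ then (Nat.factorial (d+1) : ℚ) * (K g : ℚ) else 0)
        + ∑ k : Fin (d + 1),
            (if g k = v₀
              then (Nat.factorial (d+1) : ℚ) * ((-1 : ℚ) ^ ((k : ℕ) + 1) * (K (Fin.cons v (g ∘ k.succAbove)) : ℚ))
              else 0) := by
    intro v
    rw [Fin.sum_univ_succ]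
    congr 1
    · have h1 : (Fin.cons v g : Fin (d + 2) → V) 0 = v := rfl
      have h2 : (Fin.cons v g : Fin (d + 2) → V) ∘ (Fin.succAbove 0) = g := by
        funext x
        simp [Fin.succAbove_zero]
      rw [h1, h2]
      split_ifs <;> simp
    · refine Finset.sum_congr rfl fun k _ => ?_
      have h1 : (Fin.cons v g : Fin (d + 2) → V) k.succ = g k := by simp
      have h2 : (Fin.cons v g : Fin (d + 2) → V) ∘ (Fin.succAbove k.succ) = Fin.cons v (g ∘ k.succAbove) := by
        funext x
        refine Fin.cases ?_ (fun y => ?_) x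
        · simp [Fin.succ_succAbove_zero]
        · simp [Fin.succ_succAbove_succ]
      rw [h1, h2]
      simp
  rw [Finset.sum_congr rfl (fun v _ => step3 v), Finset.sum_add_distrib]
  have part1 : (∑ v : V, if v = v₀ then (Nat.factorial (d+1) : ℚ) * (K g : ℚ) else 0)
      = (Nat.factorial (d+1) : ℚ) * (K g : ℚ) := by
    rw [Finset.sum_ite_eq' Finset.univ v₀]
    simp
  have part2 : (∑ v : V, ∑ k : Fin (d + 1),
        (if g k = v₀
          then (Nat.factorial (d+1) : ℚ) * ((-1 : ℚ) ^ ((k : ℕ) + 1) * (K (Fin.cons v (g ∘ k.succAbove)) : ℚ))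
          else 0)) = 0 := by
    rw [Finset.sum_comm]
    refine Finset.sum_eq_zero fun k _ => ?_
    by_cases hc : g k = v₀
    · simp only [if_pos hc]
      have : ∀ v : V, (Nat.factorial (d+1) : ℚ) * ((-1 : ℚ) ^ ((k : ℕ) + 1) * (K (Fin.cons v (g ∘ k.succAbove)) : ℚ))
          = ((Nat.factorial (d+1) : ℚ) * (-1 : ℚ) ^ ((k : ℕ) + 1)) * (K (Fin.cons v (g ∘ k.succAbove)) : ℚ) := by
        intro v; ring
      rw [Finset.sum_congr rfl (fun v _ => this v), ← Finset.mul_sum]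
      have : (∑ v : V, (K (Fin.cons v (g ∘ k.succAbove)) : ℚ)) = ((bdry K (g ∘ k.succAbove) : ℤ) : ℚ) := by
        unfold bdry; push_cast; rfl
      rw [this, hcl]
      simp
    · simp [hc]
  rw [part1, part2, add_zero, mul_comm]

end AuxCone

section AuxCollapse

variable {V V' W : Type*}

def connSum' {V V' W : Type*} [Fintype V] [Fintype V'] [DecidableEq V] [DecidableEq V']
    [DecidableEq W] {d : ℕ} (K : (Fin (d + 1) → V) → ℤ) (K' : (Fin (d + 1) → V') → ℤ)
    (vF : Fin (d + 1) → V) (vF' : Fin (d + 1) → V') (j : V → W) (j' : V' → W) :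
    (Fin (d + 1) → W) → ℤ :=
  pushChain (Sum.elim j j')
    (fun g : Fin (d + 1) → V ⊕ V' =>
      pushChain Sum.inl K g + pushChain Sum.inr K' g
        - pushChain Sum.inl (simplexChain vF) g - pushChain Sum.inr (simplexChain vF') g)

lemma connSum'_eq [Fintype V] [Fintype V'] [DecidableEq V] [DecidableEq V'] [DecidableEq W]
    {d : ℕ} (K : (Fin (d + 1) → V) → ℤ) (K' : (Fin (d + 1) → V') → ℤ)
    (vF : Fin (d + 1) → V) (vF' : Fin (d + 1) → V') (j : V → W) (j' : V' → W)
    (ρ : Equiv.Perm (Fin (d + 1))) (hρ : Equiv.Perm.sign ρ = -1)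
    (hglue : ∀ i, j (vF i) = j' (vF' (ρ i))) (f : Fin (d + 1) → W) :
    connSum' K K' vF vF' j j' f = pushChain j K f + pushChain j' K' f := by
  unfold connSum'
  rw [show (fun g : Fin (d + 1) → V ⊕ V' =>
      pushChain Sum.inl K g + pushChain Sum.inr K' g
        - pushChain Sum.inl (simplexChain vF) g - pushChain Sum.inr (simplexChain vF') g)
      = (fun g : Fin (d + 1) → V ⊕ V' =>
        (fun g => (fun g => pushChain Sum.inl K g + pushChain Sum.inr K' g) g
          - pushChain Sum.inl (simplexChain vF) g) g - pushChain Sum.inr (simplexChain vF') g) from rfl]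
  rw [pushChain_sub, pushChain_sub, pushChain_add]
  rw [pushChain_comp, pushChain_comp, pushChain_comp, pushChain_comp]
  have e1 : Sum.elim j j' ∘ Sum.inl = j := rfl
  have e2 : Sum.elim j j' ∘ Sum.inr = j' := rfl
  rw [e1, e2]
  rw [pushChain_simplexChain, pushChain_simplexChain]
  have e3 : j ∘ vF = (j' ∘ vF') ∘ ρ := by funext i; exact hglue i
  rw [e3, simplexChain_comp_perm, hρ]
  push_cast
  ring

/-- Pushing a cycle into the (d+1)-point range of an injective `vF` kills it. -/
lemma pushChain_smallRange [Fintype V] [Fintype V'] [DecidableEq V] {d : ℕ}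
    (q : V' → V) (vF : Fin (d + 1) → V) (hvF : Function.Injective vF)
    (hq : ∀ x, ∃ k, q x = vF k)
    (K' : (Fin (d + 1) → V') → ℤ) (hK' : IsAltChain d K') (hcl : ∀ g, bdry K' g = 0)
    (f : Fin (d + 1) → V) : pushChain q K' f = 0 := by
  classical
  set c : (Fin (d + 1) → V) → ℤ := pushChain q K' with hc
  have hcalt : IsAltChain d c := isAltChain_pushChain hK' q
  have hccl : ∀ g, bdry c g = 0 := by
    intro g
    rw [hc, bdry_pushChain]
    unfold pushChain
    refine Finset.sum_eq_zero fun h _ => ?_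
    split_ifs
    · exact hcl h
    · rfl
  have hsupp : ∀ (f : Fin (d + 1) → V) (k₀ : Fin (d + 1)), (∀ l, f k₀ ≠ vF l) → c f = 0 := by
    intro f k₀ hk
    rw [hc]
    unfold pushChain
    refine Finset.sum_eq_zero fun g _ => ?_
    rw [if_neg]
    intro he
    obtain ⟨l, hl⟩ := hq (g k₀)
    exact hk l ((congrFun he k₀).symm.trans hl)
  have hcvF : c vF = 0 := by
    have hb := hccl (vF ∘ Fin.succ)
    unfold bdry at hb
    rw [Finset.sum_eq_single (vF 0)] at hb
    · rw [← hb]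
      congr 1
      funext x
      refine Fin.cases ?_ (fun y => ?_) x <;> simp
    · intro v _ hv
      by_cases hvr : ∃ l, v = vF l
      · obtain ⟨l, hl⟩ := hvr
        have hl0 : l ≠ 0 := by rintro rfl; exact hv hl
        refine hcalt.eq_zero_of_not_injective ?_
        intro hI
        apply hl0
        have hval : (Fin.cons v (vF ∘ Fin.succ) : Fin (d + 1) → V) 0
            = (Fin.cons v (vF ∘ Fin.succ) : Fin (d + 1) → V) ((l.pred hl0).succ) := by
          rw [Fin.cons_zero, Fin.cons_succ, hl]
          show vF l = vF ((l.pred hl0).succ)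
          rw [Fin.succ_pred]
        have h2 : (0 : Fin (d + 1)) = (l.pred hl0).succ := hI hval
        exact absurd h2.symm (Fin.succ_ne_zero _)
      · push_neg at hvr
        exact hsupp _ 0 (by simpa using hvr)
    · intro h0; exact absurd (Finset.mem_univ _) h0
  by_cases hinj : Function.Injective f
  · by_cases hrange : ∀ k, ∃ l, f k = vF l
    · choose m hm using hrange
      have hminj : Function.Injective m := by
        intro a b hab
        apply hinj
        rw [hm a, hm b, hab]
      have hmbij : Function.Bijective m := Finite.injective_iff_bijective.mp hminj
      have hfe : f = vF ∘ (Equiv.ofBijective m hmbij) := by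
        funext k
        exact hm k
      rw [hfe, hcalt (Equiv.ofBijective m hmbij) vF, hcvF, smul_zero]
    · push_neg at hrange
      obtain ⟨k₀, hk₀⟩ := hrange
      exact hsupp f k₀ hk₀
  · exact hcalt.eq_zero_of_not_injective hinj

end AuxCollapse

section AuxCount

variable {W U : Type*}

/-- One-sided lemma: if all positions of `t` lie in `P` except possibly those handled
by the facet, and all `P`-positions collapse into the facet, no collapse is injective. -/
lemma side_no_inj [DecidableEq U] {d : ℕ} (vF : Fin (d + 1) → U) (t : Fin (d + 2) → W)
    (R : Fin (d + 1) → W → U) (P : W → Prop) (g : W → U)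
    (hgsec : ∀ p q : Fin (d + 2), P (t p) → P (t q) → g (t p) = g (t q) → p = q)
    (hgi : ∀ (i : Fin (d + 1)) (p), P (t p) → R i (t p) = g (t p))
    (hgrange : ∀ p, P (t p) → ∃ k, g (t p) = vF k)
    (hout : ∀ (i : Fin (d + 1)) (p), ¬ P (t p) → R i (t p) = vF i)
    (i : Fin (d + 1)) : ¬ Function.Injective (R i ∘ t) := by
  classical
  intro hinj
  set B : Finset (Fin (d + 2)) := Finset.univ.filter (fun p => P (t p)) with hB
  have hmemB : ∀ p, p ∈ B ↔ P (t p) := by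
    intro p; simp [hB]
  let ψ : Fin (d + 2) → Fin (d + 1) := fun p =>
    if h : ∃ k, g (t p) = vF k then h.choose else i
  have hψspec : ∀ p ∈ B, vF (ψ p) = g (t p) := by
    intro p hp
    obtain ⟨k, hk⟩ := hgrange p ((hmemB p).1 hp)
    simp only [ψ, dif_pos (⟨k, hk⟩ : ∃ k, g (t p) = vF k)]
    exact (Exists.choose_spec (⟨k, hk⟩ : ∃ k, g (t p) = vF k)).symm
  have hψinj : Set.InjOn ψ ↑B := by
    intro p hp q hq hpq
    apply hgsec p q ((hmemB p).1 hp) ((hmemB q).1 hq)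
    rw [← hψspec p hp, ← hψspec q hq, hpq]
  have hcompl : ∀ p q : Fin (d + 2), p ∉ B → q ∉ B → p = q := by
    intro p q hp hq
    apply hinj
    show R i (t p) = R i (t q)
    rw [hout i p (fun hh => hp ((hmemB p).2 hh)), hout i q (fun hh => hq ((hmemB q).2 hh))]
  by_cases hBall : B = Finset.univ
  · have hcard := Finset.card_le_card_of_injOn ψ (fun p _ => Finset.mem_univ _) hψinj
    rw [hBall] at hcard
    simp only [Finset.card_univ, Fintype.card_fin] at hcard
    omega
  · have hex : ¬ ∀ p, p ∈ B := fun h => hBall (Finset.eq_univ_iff_forall.2 h)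
    push_neg at hex
    obtain ⟨a, ha⟩ := hex
    have hBa : B = Finset.univ.erase a := by
      ext p
      rw [Finset.mem_erase, hmemB]
      constructor
      · intro hp
        refine ⟨fun hpa => ?_, Finset.mem_univ p⟩
        subst hpa
        exact ha ((hmemB p).2 hp)
      · rintro ⟨hpa, -⟩
        by_contra hp
        exact hpa (hcompl p a (fun hh => hp ((hmemB p).1 hh)) ha)
    have hcardB : B.card = d + 1 := by
      rw [hBa, Finset.card_erase_of_mem (Finset.mem_univ a)]
      simp
    have himage : B.image ψ = Finset.univ := by
      apply Finset.eq_univ_of_card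
      rw [Finset.card_image_of_injOn hψinj, hcardB]
      simp
    have hi : i ∈ B.image ψ := by rw [himage]; exact Finset.mem_univ i
    obtain ⟨p, hp, hψp⟩ := Finset.mem_image.1 hi
    have : R i (t p) = R i (t a) := by
      rw [hgi i p ((hmemB p).1 hp), ← hψspec p hp, hψp,
        hout i a (fun hh => ha ((hmemB a).2 hh))]
    have hpa := hinj this
    rw [hBa] at hp
    exact (Finset.mem_erase.1 hp).1 hpa

/-- One-sided bound: at most one collapse on this side can be injective, if there are
pure positions on both sides. -/
lemma side_card_le_one [DecidableEq U] {d : ℕ} (vF : Fin (d + 1) → U) (t : Fin (d + 2) → W)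
    (ht : Function.Injective t)
    (R : Fin (d + 1) → W → U) (P Q : W → Prop) (g : W → U)
    (hgsec : ∀ p q : Fin (d + 2), P (t p) → P (t q) → g (t p) = g (t q) → p = q)
    (hgi : ∀ (i : Fin (d + 1)) (p), P (t p) → R i (t p) = g (t p))
    (hgrange : ∀ p, P (t p) → Q (t p) → ∃ k, g (t p) = vF k)
    (hout : ∀ (i : Fin (d + 1)) (p), ¬ P (t p) → R i (t p) = vF i)
    (hPQ : ∀ p, P (t p) ∨ Q (t p))
    (c₀ : Fin (d + 2)) (hc₀ : ¬ P (t c₀))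
    (a₀ : Fin (d + 2)) (ha₀ : ¬ Q (t a₀))
    (hA : ∀ p, ¬ Q (t p) → p = a₀) :
    (Finset.univ.filter (fun i : Fin (d + 1) => Function.Injective (R i ∘ t))).card ≤ 1 := by
  classical
  rw [Finset.card_le_one]
  intro i₁ hi₁ i₂ hi₂
  simp only [Finset.mem_filter] at hi₁ hi₂
  have hinj₁ := hi₁.2
  have hinj₂ := hi₂.2
  by_contra hne
  -- C-uniqueness from injectivity of `R i₁ ∘ t`
  have hC : ∀ p, ¬ P (t p) → p = c₀ := by
    intro p hp
    apply hinj₁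
    show R i₁ (t p) = R i₁ (t c₀)
    rw [hout i₁ p hp, hout i₁ c₀ hc₀]
  have hac : a₀ ≠ c₀ := by
    intro hh
    rcases hPQ c₀ with h | h
    · exact hc₀ h
    · exact ha₀ (hh ▸ h)
  set D : Finset (Fin (d + 2)) := Finset.univ.filter (fun p => P (t p) ∧ Q (t p)) with hD
  have hmemD : ∀ p, p ∈ D ↔ P (t p) ∧ Q (t p) := by intro p; simp [hD]
  have hDeq : D = Finset.univ \ {a₀, c₀} := by
    ext p
    rw [hmemD, Finset.mem_sdiff, Finset.mem_insert, Finset.mem_singleton]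
    constructor
    · rintro ⟨hp1, hp2⟩
      refine ⟨Finset.mem_univ p, ?_⟩
      rintro (rfl | rfl)
      · exact ha₀ hp2
      · exact hc₀ hp1
    · rintro ⟨-, hp⟩
      push_neg at hp
      constructor
      · by_contra hh
        exact hp.2 (hC p hh)
      · by_contra hh
        exact hp.1 (hA p hh)
  have hcardD : D.card = d := by
    rw [hDeq, Finset.card_sdiff_of_subset (Finset.subset_univ _), Finset.card_pair hac]
    simp
  let ψ : Fin (d + 2) → Fin (d + 1) := fun p =>
    if h : ∃ k, g (t p) = vF k then h.choose else i₁
  have hψspec : ∀ p ∈ D, vF (ψ p) = g (t p) := by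
    intro p hp
    obtain ⟨k, hk⟩ := hgrange p ((hmemD p).1 hp).1 ((hmemD p).1 hp).2
    simp only [ψ, dif_pos (⟨k, hk⟩ : ∃ k, g (t p) = vF k)]
    exact (Exists.choose_spec (⟨k, hk⟩ : ∃ k, g (t p) = vF k)).symm
  have hψinj : Set.InjOn ψ ↑D := by
    intro p hp q hq hpq
    apply hgsec p q ((hmemD p).1 hp).1 ((hmemD q).1 hq).1
    rw [← hψspec p hp, ← hψspec q hq, hpq]
  have hnotmem : ∀ i : Fin (d + 1), Function.Injective (R i ∘ t) → i ∉ D.image ψ := by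
    intro i hinj hmem
    obtain ⟨p, hp, hψp⟩ := Finset.mem_image.1 hmem
    have : R i (t p) = R i (t c₀) := by
      rw [hgi i p ((hmemD p).1 hp).1, ← hψspec p hp, hψp, hout i c₀ hc₀]
    have hpc := hinj this
    have : c₀ ∈ D := hpc ▸ hp
    exact hc₀ ((hmemD c₀).1 this).1
  have h2 : i₂ ∉ D.image ψ := hnotmem i₂ hinj₂
  have h1 : i₁ ∉ insert i₂ (D.image ψ) := by
    rw [Finset.mem_insert]
    rintro (rfl | hh)
    · exact hne rfl
    · exact hnotmem i₁ hinj₁ hh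
  have hcard : (insert i₁ (insert i₂ (D.image ψ))).card = d + 2 := by
    rw [Finset.card_insert_of_notMem h1, Finset.card_insert_of_notMem h2,
      Finset.card_image_of_injOn hψinj, hcardD]
  have := Finset.card_le_univ (insert i₁ (insert i₂ (D.image ψ)))
  rw [hcard] at this
  simp only [Finset.card_univ, Fintype.card_fin] at this
  omega

end AuxCount

section AuxCount2

lemma count_main {V V' W : Type*} [DecidableEq V] [DecidableEq V'] {d : ℕ} (hd : 1 ≤ d)
    (vF : Fin (d + 1) → V) (vF' : Fin (d + 1) → V')
    (j : V → W) (j' : V' → W)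
    (hcover : ∀ w : W, (∃ v, j v = w) ∨ (∃ v', j' v' = w))
    (hmeet : ∀ (v : V) (v' : V'), j v = j' v' → ∃ i, v = vF i)
    (hmeet' : ∀ (v : V) (v' : V'), j v = j' v' → ∃ i, v' = vF' i)
    (R : Fin (d + 1) → W → V) (R' : Fin (d + 1) → W → V')
    (hR : ∀ (i : Fin (d+1)) (v : V), R i (j v) = v)
    (hRn : ∀ (i : Fin (d+1)) (w : W), (¬ ∃ v, j v = w) → R i w = vF i)
    (hR' : ∀ (i : Fin (d+1)) (v' : V'), R' i (j' v') = v')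
    (hR'n : ∀ (i : Fin (d+1)) (w : W), (¬ ∃ v', j' v' = w) → R' i w = vF' i)
    (t : Fin (d + 2) → W) (ht : Function.Injective t) :
    (Finset.univ.filter (fun i : Fin (d + 1) => Function.Injective (R i ∘ t))).card
      + (Finset.univ.filter (fun i : Fin (d + 1) => Function.Injective (R' i ∘ t))).card
      ≤ d + 1 := by
  classical
  set P : W → Prop := fun w => ∃ v, j v = w with hP
  set Q : W → Prop := fun w => ∃ v', j' v' = w with hQ
  have i0 : Fin (d + 1) := ⟨0, by omega⟩
  -- V-side structural facts
  have hgiV : ∀ (i : Fin (d+1)) (p : Fin (d+2)), P (t p) → R i (t p) = R i0 (t p) := by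
    intro i p ⟨v, hv⟩
    rw [← hv, hR, hR]
  have hsecV : ∀ p q : Fin (d+2), P (t p) → P (t q) → R i0 (t p) = R i0 (t q) → p = q := by
    rintro p q ⟨v, hv⟩ ⟨u, hu⟩ h
    rw [← hv, ← hu, hR, hR] at h
    exact ht (by rw [← hv, ← hu, h])
  have hrangeV : ∀ p : Fin (d+2), P (t p) → Q (t p) → ∃ k, R i0 (t p) = vF k := by
    rintro p ⟨v, hv⟩ ⟨v', hv'⟩
    obtain ⟨k, hk⟩ := hmeet v v' (hv.trans hv'.symm)
    exact ⟨k, by rw [← hv, hR, hk]⟩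
  have houtV : ∀ (i : Fin (d+1)) (p : Fin (d+2)), ¬ P (t p) → R i (t p) = vF i := by
    intro i p hp
    exact hRn i (t p) hp
  -- V'-side structural facts
  have hgiV' : ∀ (i : Fin (d+1)) (p : Fin (d+2)), Q (t p) → R' i (t p) = R' i0 (t p) := by
    intro i p ⟨v', hv'⟩
    rw [← hv', hR', hR']
  have hsecV' : ∀ p q : Fin (d+2), Q (t p) → Q (t q) → R' i0 (t p) = R' i0 (t q) → p = q := by
    rintro p q ⟨v, hv⟩ ⟨u, hu⟩ h
    rw [← hv, ← hu, hR', hR'] at h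
    exact ht (by rw [← hv, ← hu, h])
  have hrangeV' : ∀ p : Fin (d+2), Q (t p) → P (t p) → ∃ k, R' i0 (t p) = vF' k := by
    rintro p ⟨v', hv'⟩ ⟨v, hv⟩
    obtain ⟨k, hk⟩ := hmeet' v v' (hv.trans hv'.symm)
    exact ⟨k, by rw [← hv', hR', hk]⟩
  have houtV' : ∀ (i : Fin (d+1)) (p : Fin (d+2)), ¬ Q (t p) → R' i (t p) = vF' i := by
    intro i p hp
    exact hR'n i (t p) hp
  have hPQ : ∀ p : Fin (d+2), P (t p) ∨ Q (t p) := fun p => hcover (t p)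
  by_cases h1 : ∀ p : Fin (d+2), P (t p)
  · -- all positions on the V side: the primed side has no injective collapse
    have hempty : (Finset.univ.filter
        (fun i : Fin (d + 1) => Function.Injective (R' i ∘ t))) = ∅ := by
      rw [Finset.filter_eq_empty_iff]
      intro i _
      exact side_no_inj vF' t R' Q (R' i0) hsecV'
        hgiV' (fun p hp => hrangeV' p hp (h1 p)) houtV' i
    rw [hempty]
    simp only [Finset.card_empty, add_zero]
    calc (Finset.univ.filter (fun i : Fin (d + 1) => Function.Injective (R i ∘ t))).card
        ≤ Finset.univ.card := Finset.card_filter_le _ _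
      _ = d + 1 := by simp
  by_cases h2 : ∀ p : Fin (d+2), Q (t p)
  · have hempty : (Finset.univ.filter
        (fun i : Fin (d + 1) => Function.Injective (R i ∘ t))) = ∅ := by
      rw [Finset.filter_eq_empty_iff]
      intro i _
      exact side_no_inj vF t R P (R i0) hsecV
        hgiV (fun p hp => hrangeV p hp (h2 p)) houtV i
    rw [hempty]
    simp only [Finset.card_empty, zero_add]
    calc (Finset.univ.filter (fun i : Fin (d + 1) => Function.Injective (R' i ∘ t))).card
        ≤ Finset.univ.card := Finset.card_filter_le _ _
      _ = d + 1 := by simp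
  push_neg at h1 h2
  obtain ⟨c₀, hc₀⟩ := h1
  obtain ⟨a₀, ha₀⟩ := h2
  rcases Finset.eq_empty_or_nonempty
      (Finset.univ.filter (fun i : Fin (d + 1) => Function.Injective (R i ∘ t))) with hGR | hGR
  · rw [hGR]
    simp only [Finset.card_empty, zero_add]
    calc (Finset.univ.filter (fun i : Fin (d + 1) => Function.Injective (R' i ∘ t))).card
        ≤ Finset.univ.card := Finset.card_filter_le _ _
      _ = d + 1 := by simp
  rcases Finset.eq_empty_or_nonempty
      (Finset.univ.filter (fun i : Fin (d + 1) => Function.Injective (R' i ∘ t))) with hGR' | hGR'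
  · rw [hGR']
    simp only [Finset.card_empty, add_zero]
    calc (Finset.univ.filter (fun i : Fin (d + 1) => Function.Injective (R i ∘ t))).card
        ≤ Finset.univ.card := Finset.card_filter_le _ _
      _ = d + 1 := by simp
  obtain ⟨i₁, hi₁⟩ := hGR
  obtain ⟨i₂, hi₂⟩ := hGR'
  rw [Finset.mem_filter] at hi₁ hi₂
  have hA : ∀ p : Fin (d+2), ¬ Q (t p) → p = a₀ := by
    intro p hp
    apply hi₂.2
    show R' i₂ (t p) = R' i₂ (t a₀)
    rw [houtV' i₂ p hp, houtV' i₂ a₀ ha₀]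
  have hCu : ∀ p : Fin (d+2), ¬ P (t p) → p = c₀ := by
    intro p hp
    apply hi₁.2
    show R i₁ (t p) = R i₁ (t c₀)
    rw [houtV i₁ p hp, houtV i₁ c₀ hc₀]
  have b1 := side_card_le_one vF t ht R P Q (R i0) hsecV hgiV hrangeV houtV hPQ
    c₀ hc₀ a₀ ha₀ hA
  have b2 := side_card_le_one vF' t ht R' Q P (R' i0) hsecV' hgiV'
    hrangeV' houtV' (fun p => (hPQ p).symm) a₀ ha₀ c₀ hc₀ hCu
  omega

lemma count_main_real {V V' W : Type*} [DecidableEq V] [DecidableEq V'] {d : ℕ} (hd : 1 ≤ d)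
    (vF : Fin (d + 1) → V) (vF' : Fin (d + 1) → V')
    (j : V → W) (j' : V' → W)
    (hcover : ∀ w : W, (∃ v, j v = w) ∨ (∃ v', j' v' = w))
    (hmeet : ∀ (v : V) (v' : V'), j v = j' v' → ∃ i, v = vF i)
    (hmeet' : ∀ (v : V) (v' : V'), j v = j' v' → ∃ i, v' = vF' i)
    (R : Fin (d + 1) → W → V) (R' : Fin (d + 1) → W → V')
    (hR : ∀ (i : Fin (d+1)) (v : V), R i (j v) = v)
    (hRn : ∀ (i : Fin (d+1)) (w : W), (¬ ∃ v, j v = w) → R i w = vF i)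
    (hR' : ∀ (i : Fin (d+1)) (v' : V'), R' i (j' v') = v')
    (hR'n : ∀ (i : Fin (d+1)) (w : W), (¬ ∃ v', j' v' = w) → R' i w = vF' i)
    (t : Fin (d + 2) → W) (ht : Function.Injective t) (X : ℝ) (hX : 0 ≤ X) :
    (∑ i : Fin (d + 1), if Function.Injective (R i ∘ t) then X else 0)
      + (∑ i : Fin (d + 1), if Function.Injective (R' i ∘ t) then X else 0)
      ≤ ((d : ℝ) + 1) * X := by
  have hc := count_main hd vF vF' j j' hcover hmeet hmeet' R R' hR hRn hR' hR'n t ht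
  rw [← Finset.sum_filter, ← Finset.sum_filter, Finset.sum_const, Finset.sum_const,
    nsmul_eq_mul, nsmul_eq_mul, ← add_mul]
  have h3 : (((Finset.univ.filter (fun i : Fin (d + 1) =>
        Function.Injective (R i ∘ t))).card
      + (Finset.univ.filter (fun i : Fin (d + 1) =>
        Function.Injective (R' i ∘ t))).card : ℕ) : ℝ)
      ≤ ((d + 1 : ℕ) : ℝ) := Nat.cast_le.mpr hc
  push_cast at h3
  exact mul_le_mul_of_nonneg_right h3 hX

end AuxCount2

section AuxNorm

variable {V W : Type*}

lemma normsum_nonneg [Fintype V] {n : ℕ} (c : (Fin n → V) → ℚ) :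
    0 ≤ ∑ f : Fin n → V, |(c f : ℝ)| :=
  Finset.sum_nonneg fun f _ => abs_nonneg _

/-- Push-forward does not increase the 1-norm. -/
lemma pushNorm_le [Fintype V] [Fintype W] [DecidableEq W] {n : ℕ}
    (q : V → W) (c : (Fin n → V) → ℚ) :
    ∑ f : Fin n → W, |((pushChain q c f : ℚ) : ℝ)| ≤ ∑ g : Fin n → V, |(c g : ℝ)| := by
  have step : ∀ f : Fin n → W, |((pushChain q c f : ℚ) : ℝ)|
      ≤ ∑ g : Fin n → V, (if q ∘ g = f then |(c g : ℝ)| else 0) := by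
    intro f
    unfold pushChain
    push_cast
    refine le_trans (Finset.abs_sum_le_sum_abs _ _) ?_
    refine Finset.sum_le_sum fun g _ => ?_
    split_ifs <;> simp
  refine le_trans (Finset.sum_le_sum fun f _ => step f) ?_
  rw [Finset.sum_comm]
  refine le_of_eq (Finset.sum_congr rfl fun g _ => ?_)
  have flip : ∀ f : Fin n → W, (if q ∘ g = f then |(c g : ℝ)| else 0)
      = (if f = q ∘ g then |(c g : ℝ)| else 0) := by
    intro f
    by_cases h : q ∘ g = f
    · rw [if_pos h, if_pos h.symm]
    · rw [if_neg h, if_neg (fun hh => h hh.symm)]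
  rw [Finset.sum_congr rfl fun f _ => flip f,
    Finset.sum_ite_eq' Finset.univ (q ∘ g) (fun _ => |(c g : ℝ)|)]
  simp

/-- Refined bound: only tuples with injective image contribute. -/
lemma pushNorm_le_inj [Fintype V] [Fintype W] [DecidableEq W] {n : ℕ}
    (q : V → W) (c : (Fin (n + 1) → V) → ℚ) (hc : IsAltChain n c) :
    ∑ f : Fin (n + 1) → W, |((pushChain q c f : ℚ) : ℝ)|
      ≤ ∑ g : Fin (n + 1) → V, (if Function.Injective (q ∘ g) then |(c g : ℝ)| else 0) := by
  have halt : IsAltChain n (pushChain q c) := isAltChain_pushChain hc q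
  rw [← Finset.sum_filter_add_sum_filter_not Finset.univ
    (fun f : Fin (n + 1) → W => Function.Injective f)]
  have hzero : ∑ f ∈ Finset.univ.filter
      (fun f : Fin (n + 1) → W => ¬ Function.Injective f), |((pushChain q c f : ℚ) : ℝ)| = 0 := by
    refine Finset.sum_eq_zero fun f hf => ?_
    rw [Finset.mem_filter] at hf
    rw [halt.eq_zero_of_not_injective hf.2]
    simp
  rw [hzero, add_zero]
  have step : ∀ f : Fin (n + 1) → W, |((pushChain q c f : ℚ) : ℝ)|
      ≤ ∑ g : Fin (n + 1) → V, (if q ∘ g = f then |(c g : ℝ)| else 0) := by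
    intro f
    unfold pushChain
    push_cast
    refine le_trans (Finset.abs_sum_le_sum_abs _ _) ?_
    refine Finset.sum_le_sum fun g _ => ?_
    split_ifs <;> simp
  refine le_trans (Finset.sum_le_sum fun f _ => step f) ?_
  rw [Finset.sum_comm]
  refine le_of_eq (Finset.sum_congr rfl fun g _ => ?_)
  have : ∀ f : Fin (n+1) → W, (if q ∘ g = f then |(c g : ℝ)| else 0)
      = (if f = q ∘ g then |(c g : ℝ)| else 0) := by
    intro f
    by_cases h : q ∘ g = f
    · rw [if_pos h, if_pos h.symm]
    · rw [if_neg h, if_neg (fun hh => h hh.symm)]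
  rw [Finset.sum_congr rfl fun f _ => this f]
  rw [Finset.sum_filter]
  have key : ∀ a : Fin (n+1) → W,
      (if Function.Injective a then (if a = q ∘ g then |(c g : ℝ)| else 0) else 0)
      = (if a = q ∘ g then (if Function.Injective (q ∘ g) then |(c g : ℝ)| else 0) else 0) := by
    intro a
    by_cases h1 : a = q ∘ g
    · subst h1; simp
    · simp [h1]
  rw [Finset.sum_congr rfl fun a _ => key a]
  rw [Finset.sum_ite_eq' Finset.univ (q ∘ g)
    (fun _ => if Function.Injective (q ∘ g) then |(c g : ℝ)| else 0)]
  simp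

end AuxNorm


set_option maxHeartbeats 2000000 in
/-- Additivity of `V_ℚ` under connected sum along a `d`-simplex. -/
theorem stmt6 {V V' W : Type*} [Fintype V] [DecidableEq V]
    [Fintype V'] [DecidableEq V'] [Fintype W] [DecidableEq W] (d : ℕ)
    (K : (Fin (d + 1) → V) → ℤ) (K' : (Fin (d + 1) → V') → ℤ)
    (hK : IsAdmissible d K) (hK' : IsAdmissible d K')
    (vF : Fin (d + 1) → V) (hvF : Function.Injective vF) (hFfacet : K vF = 1)
    (vF' : Fin (d + 1) → V') (hvF' : Function.Injective vF') (hFfacet' : K' vF' = 1)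
    (j : V → W) (j' : V' → W) (hj : Function.Injective j) (hj' : Function.Injective j')
    (hcover : ∀ w : W, (∃ v, j v = w) ∨ (∃ v', j' v' = w))
    (hmeet : ∀ (v : V) (v' : V'), j v = j' v' → ∃ i, v = vF i)
    (ρ : Equiv.Perm (Fin (d + 1))) (hρ : Equiv.Perm.sign ρ = -1)
    (hglue : ∀ i, j (vF i) = j' (vF' (ρ i)))
    (hadm : IsAdmissible d (connSum K K' vF vF' j j')) :
    VQ d (connSum K K' vF vF' j j') = VQ d K + VQ d K' := by
  classical
  -- the case d = 0 is vacuous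
  have hd : 1 ≤ d := by
    by_contra hcon
    have hd0 : d = 0 := by omega
    subst hd0
    have hone : ρ = 1 := by
      apply Equiv.ext
      intro x
      have h1 : (ρ x : ℕ) < 1 := (ρ x).isLt
      have h2 : (x : ℕ) < 1 := x.isLt
      simp only [Equiv.Perm.one_apply]
      exact Fin.ext (by omega)
    rw [hone] at hρ
    simp at hρ
  -- normal form of the connected sum chain
  have hCS : connSum K K' vF vF' j j'
      = fun f => pushChain j K f + pushChain j' K' f := by
    funext f
    exact connSum'_eq K K' vF vF' j j' ρ hρ hglue f
  -- derived gluing facts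
  have hmeet' : ∀ (v : V) (v' : V'), j v = j' v' → ∃ i, v' = vF' i := by
    intro v v' h
    obtain ⟨i, hi⟩ := hmeet v v' h
    refine ⟨ρ i, hj' ?_⟩
    rw [← hglue i, ← hi, h]
  -- the three defining sets
  set S : Set ℝ := { x : ℝ | ∃ α : (Fin (d + 2) → V) → ℚ,
    IsAltChain (d + 1) α ∧ (∀ g, bdry α g = (K g : ℚ)) ∧ x = normQ α } with hSdef
  set S' : Set ℝ := { x : ℝ | ∃ α : (Fin (d + 2) → V') → ℚ,
    IsAltChain (d + 1) α ∧ (∀ g, bdry α g = (K' g : ℚ)) ∧ x = normQ α } with hS'def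
  set S'' : Set ℝ := { x : ℝ | ∃ α : (Fin (d + 2) → W) → ℚ,
    IsAltChain (d + 1) α ∧ (∀ g, bdry α g = (connSum K K' vF vF' j j' g : ℚ)) ∧ x = normQ α }
    with hS''def
  have hVQ : VQ d K = sInf S := rfl
  have hVQ' : VQ d K' = sInf S' := rfl
  have hVQ'' : VQ d (connSum K K' vF vF' j j') = sInf S'' := rfl
  -- bounded below
  have hbddS : BddBelow S := by
    refine ⟨0, fun x hx => ?_⟩
    rw [hSdef] at hx
    obtain ⟨α, -, -, rfl⟩ := hx
    unfold normQ
    apply div_nonneg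
    · exact Finset.sum_nonneg fun f _ => abs_nonneg _
    · positivity
  have hbddS' : BddBelow S' := by
    refine ⟨0, fun x hx => ?_⟩
    rw [hS'def] at hx
    obtain ⟨α, -, -, rfl⟩ := hx
    unfold normQ
    apply div_nonneg
    · exact Finset.sum_nonneg fun f _ => abs_nonneg _
    · positivity
  have hbddS'' : BddBelow S'' := by
    refine ⟨0, fun x hx => ?_⟩
    rw [hS''def] at hx
    obtain ⟨α, -, -, rfl⟩ := hx
    unfold normQ
    apply div_nonneg
    · exact Finset.sum_nonneg fun f _ => abs_nonneg _
    · positivity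
  -- nonempty (cone fillings)
  have hmemS : normQ (coneFill (vF 0) K) ∈ S := by
    rw [hSdef]
    exact ⟨coneFill (vF 0) K, coneFill_alt (vF 0) K,
      fun g => bdry_coneFill (vF 0) K hK.chain hK.closed g, rfl⟩
  have hmemS' : normQ (coneFill (vF' 0) K') ∈ S' := by
    rw [hS'def]
    exact ⟨coneFill (vF' 0) K', coneFill_alt (vF' 0) K',
      fun g => bdry_coneFill (vF' 0) K' hK'.chain hK'.closed g, rfl⟩
  have hmemS'' : normQ (coneFill (j (vF 0)) (connSum K K' vF vF' j j')) ∈ S'' := by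
    rw [hS''def]
    exact ⟨_, coneFill_alt _ _,
      fun g => bdry_coneFill (j (vF 0)) _ hadm.chain hadm.closed g, rfl⟩
  have hfact_pos : (0 : ℝ) < (Nat.factorial (d + 2) : ℝ) := by positivity
  ---------------------------------------------------------------------------
  -- Direction ≤ : glue fillings
  ---------------------------------------------------------------------------
  have key_le : ∀ x ∈ S, ∀ y ∈ S', sInf S'' ≤ x + y := by
    intro x hx y hy
    rw [hSdef] at hx
    rw [hS'def] at hy
    obtain ⟨α, hαalt, hαbd, rfl⟩ := hx
    obtain ⟨α', hα'alt, hα'bd, rfl⟩ := hy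
    set β : (Fin (d + 2) → W) → ℚ := fun f => pushChain j α f + pushChain j' α' f with hβ
    have hβalt : IsAltChain (d + 1) β := by
      intro σ f
      show pushChain j α (f ∘ σ) + pushChain j' α' (f ∘ σ) = _
      rw [isAltChain_pushChain hαalt j σ f, isAltChain_pushChain hα'alt j' σ f, ← smul_add]
    have hβbd : ∀ g, bdry β g = (connSum K K' vF vF' j j' g : ℚ) := by
      intro g
      have h1 : bdry β g = bdry (pushChain j α) g + bdry (pushChain j' α') g := by
        unfold bdry
        rw [← Finset.sum_add_distrib]
      rw [h1, bdry_pushChain, bdry_pushChain]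
      have e1 : bdry α = fun g => (K g : ℚ) := funext hαbd
      have e2 : bdry α' = fun g => (K' g : ℚ) := funext hα'bd
      rw [e1, e2, pushChain_intCast, pushChain_intCast, hCS]
      push_cast
      ring
    have hnorm : normQ β ≤ normQ α + normQ α' := by
      unfold normQ
      rw [← add_div]
      have hsum : (∑ f : Fin (d + 2) → W, |(β f : ℝ)|)
          ≤ (∑ g : Fin (d + 2) → V, |(α g : ℝ)|) + ∑ g : Fin (d + 2) → V', |(α' g : ℝ)| := by
        have h1 : ∀ f : Fin (d + 2) → W,
            |(β f : ℝ)| ≤ |((pushChain j α f : ℚ) : ℝ)| + |((pushChain j' α' f : ℚ) : ℝ)| := by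
          intro f
          rw [hβ]
          push_cast
          exact abs_add_le _ _
        calc (∑ f : Fin (d + 2) → W, |(β f : ℝ)|)
            ≤ ∑ f : Fin (d + 2) → W,
                (|((pushChain j α f : ℚ) : ℝ)| + |((pushChain j' α' f : ℚ) : ℝ)|) :=
              Finset.sum_le_sum fun f _ => h1 f
          _ = (∑ f : Fin (d + 2) → W, |((pushChain j α f : ℚ) : ℝ)|)
              + ∑ f : Fin (d + 2) → W, |((pushChain j' α' f : ℚ) : ℝ)| :=
              Finset.sum_add_distrib
          _ ≤ _ := add_le_add (pushNorm_le j α) (pushNorm_le j' α')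
      gcongr
    calc sInf S'' ≤ normQ β := csInf_le hbddS''
          (by rw [hS''def]; exact ⟨β, hβalt, hβbd, rfl⟩)
      _ ≤ normQ α + normQ α' := hnorm
  have le1 : sInf S'' ≤ sInf S + sInf S' := by
    have h2 : ∀ x ∈ S, sInf S'' - sInf S' ≤ x := by
      intro x hx
      have h1 : sInf S'' - x ≤ sInf S' :=
        le_csInf ⟨_, hmemS'⟩ (fun y hy => by linarith [key_le x hx y hy])
      linarith
    have := le_csInf ⟨_, hmemS⟩ h2
    linarith
  ---------------------------------------------------------------------------
  -- Direction ≥ : collapse fillings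
  ---------------------------------------------------------------------------
  have key_ge : ∀ z ∈ S'', sInf S + sInf S' ≤ z := by
    intro z hz
    rw [hS''def] at hz
    obtain ⟨β, hβalt, hβbd, rfl⟩ := hz
    set Rm : Fin (d + 1) → W → V :=
      fun i w => if h : ∃ v, j v = w then h.choose else vF i with hRmdef
    set Rm' : Fin (d + 1) → W → V' :=
      fun i w => if h : ∃ v', j' v' = w then h.choose else vF' i with hRm'def
    have hRj : ∀ (i : Fin (d + 1)) (v : V), Rm i (j v) = v := by
      intro i v
      have hex : ∃ u, j u = j v := ⟨v, rfl⟩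
      simp only [hRmdef, dif_pos hex]
      exact hj hex.choose_spec
    have hRn : ∀ (i : Fin (d + 1)) (w : W), (¬ ∃ v, j v = w) → Rm i w = vF i := by
      intro i w hw
      simp only [hRmdef, dif_neg hw]
    have hR'j : ∀ (i : Fin (d + 1)) (v' : V'), Rm' i (j' v') = v' := by
      intro i v'
      have hex : ∃ u, j' u = j' v' := ⟨v', rfl⟩
      simp only [hRm'def, dif_pos hex]
      exact hj' hex.choose_spec
    have hR'n : ∀ (i : Fin (d + 1)) (w : W), (¬ ∃ v', j' v' = w) → Rm' i w = vF' i := by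
      intro i w hw
      simp only [hRm'def, dif_neg hw]
    -- boundaries of the collapsed chains
    have hbdV : ∀ (i : Fin (d + 1)) (g : Fin (d + 1) → V),
        bdry (pushChain (Rm i) β) g = (K g : ℚ) := by
      intro i g
      rw [bdry_pushChain]
      have e : bdry β = fun g => (connSum K K' vF vF' j j' g : ℚ) := funext hβbd
      rw [e, pushChain_intCast]
      have hz : pushChain (Rm i) (connSum K K' vF vF' j j') g = K g := by
        rw [hCS, pushChain_add, pushChain_comp, pushChain_comp]
        have hji : Rm i ∘ j = id := funext (hRj i)
        rw [hji, pushChain_id]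
        have hq : ∀ x : V', ∃ k, (Rm i ∘ j') x = vF k := by
          intro x
          by_cases hx : ∃ v, j v = j' x
          · obtain ⟨k, hk⟩ := hmeet hx.choose x hx.choose_spec
            refine ⟨k, ?_⟩
            show Rm i (j' x) = vF k
            simp only [hRmdef, dif_pos hx]
            exact hk
          · exact ⟨i, hRn i (j' x) hx⟩
        rw [pushChain_smallRange (Rm i ∘ j') vF hvF hq K' hK'.chain hK'.closed g, add_zero]
      rw [hz]
    have hbdV' : ∀ (i : Fin (d + 1)) (g : Fin (d + 1) → V'),
        bdry (pushChain (Rm' i) β) g = (K' g : ℚ) := by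
      intro i g
      rw [bdry_pushChain]
      have e : bdry β = fun g => (connSum K K' vF vF' j j' g : ℚ) := funext hβbd
      rw [e, pushChain_intCast]
      have hz : pushChain (Rm' i) (connSum K K' vF vF' j j') g = K' g := by
        rw [hCS, pushChain_add, pushChain_comp, pushChain_comp]
        have hji : Rm' i ∘ j' = id := funext (hR'j i)
        rw [hji, pushChain_id]
        have hq : ∀ x : V, ∃ k, (Rm' i ∘ j) x = vF' k := by
          intro x
          by_cases hx : ∃ v', j' v' = j x
          · obtain ⟨k, hk⟩ := hmeet' x hx.choose hx.choose_spec.symm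
            refine ⟨k, ?_⟩
            show Rm' i (j x) = vF' k
            simp only [hRm'def, dif_pos hx]
            exact hk
          · exact ⟨i, hR'n i (j x) hx⟩
        rw [pushChain_smallRange (Rm' i ∘ j) vF' hvF' hq K hK.chain hK.closed g, zero_add]
      rw [hz]
    -- the averaged fillings
    set α : (Fin (d + 2) → V) → ℚ :=
      fun f => (∑ i : Fin (d + 1), pushChain (Rm i) β f) / ((d : ℚ) + 1) with hαdef
    set α' : (Fin (d + 2) → V') → ℚ :=
      fun f => (∑ i : Fin (d + 1), pushChain (Rm' i) β f) / ((d : ℚ) + 1) with hα'def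
    have hdq : ((d : ℚ) + 1) ≠ 0 := by positivity
    have hαalt : IsAltChain (d + 1) α := by
      intro σ f
      show (∑ i : Fin (d + 1), pushChain (Rm i) β (f ∘ σ)) / ((d : ℚ) + 1) = _
      rw [Finset.sum_congr rfl (fun i _ => isAltChain_pushChain hβalt (Rm i) σ f),
        ← Finset.smul_sum, smul_div_assoc]
    have hα'alt : IsAltChain (d + 1) α' := by
      intro σ f
      show (∑ i : Fin (d + 1), pushChain (Rm' i) β (f ∘ σ)) / ((d : ℚ) + 1) = _
      rw [Finset.sum_congr rfl (fun i _ => isAltChain_pushChain hβalt (Rm' i) σ f),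
        ← Finset.smul_sum, smul_div_assoc]
    have hαbd : ∀ g, bdry α g = (K g : ℚ) := by
      intro g
      show (∑ v : V, (∑ i : Fin (d + 1), pushChain (Rm i) β (Fin.cons v g)) / ((d : ℚ) + 1))
        = (K g : ℚ)
      rw [← Finset.sum_div, Finset.sum_comm]
      have hterm : ∀ i : Fin (d + 1),
          (∑ v : V, pushChain (Rm i) β (Fin.cons v g)) = (K g : ℚ) := fun i => hbdV i g
      rw [Finset.sum_congr rfl (fun i (_ : i ∈ Finset.univ) => hterm i)]
      rw [Finset.sum_const, Finset.card_univ, Fintype.card_fin, nsmul_eq_mul]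
      push_cast
      rw [mul_comm, mul_div_assoc, div_self hdq, mul_one]
    have hα'bd : ∀ g, bdry α' g = (K' g : ℚ) := by
      intro g
      show (∑ v : V', (∑ i : Fin (d + 1), pushChain (Rm' i) β (Fin.cons v g)) / ((d : ℚ) + 1))
        = (K' g : ℚ)
      rw [← Finset.sum_div, Finset.sum_comm]
      have hterm : ∀ i : Fin (d + 1),
          (∑ v : V', pushChain (Rm' i) β (Fin.cons v g)) = (K' g : ℚ) := fun i => hbdV' i g
      rw [Finset.sum_congr rfl (fun i (_ : i ∈ Finset.univ) => hterm i)]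
      rw [Finset.sum_const, Finset.card_univ, Fintype.card_fin, nsmul_eq_mul]
      push_cast
      rw [mul_comm, mul_div_assoc, div_self hdq, mul_one]
    -- norm bound
    have hdR : (0 : ℝ) < (d : ℝ) + 1 := by positivity
    have hsum : (∑ f : Fin (d + 2) → V, |(α f : ℝ)|) + (∑ f : Fin (d + 2) → V', |(α' f : ℝ)|)
        ≤ ∑ g : Fin (d + 2) → W, |(β g : ℝ)| := by
      set T : Fin (d + 1) → ℝ := fun i =>
        ∑ g : Fin (d + 2) → W, (if Function.Injective (Rm i ∘ g) then |(β g : ℝ)| else 0)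
        with hTdef
      set T' : Fin (d + 1) → ℝ := fun i =>
        ∑ g : Fin (d + 2) → W, (if Function.Injective (Rm' i ∘ g) then |(β g : ℝ)| else 0)
        with hT'def
      have stepA : (∑ f : Fin (d + 2) → V, |(α f : ℝ)|)
          ≤ (∑ i : Fin (d + 1), T i) / ((d : ℝ) + 1) := by
        have h1 : ∀ f : Fin (d + 2) → V, |(α f : ℝ)|
            ≤ (∑ i : Fin (d + 1), |((pushChain (Rm i) β f : ℚ) : ℝ)|) / ((d : ℝ) + 1) := by
          intro f
          rw [hαdef]
          push_cast
          rw [abs_div, abs_of_pos hdR]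
          gcongr
          exact Finset.abs_sum_le_sum_abs _ _
        calc (∑ f : Fin (d + 2) → V, |(α f : ℝ)|)
            ≤ ∑ f : Fin (d + 2) → V,
                (∑ i : Fin (d + 1), |((pushChain (Rm i) β f : ℚ) : ℝ)|) / ((d : ℝ) + 1) :=
              Finset.sum_le_sum fun f _ => h1 f
          _ = (∑ i : Fin (d + 1), ∑ f : Fin (d + 2) → V,
                |((pushChain (Rm i) β f : ℚ) : ℝ)|) / ((d : ℝ) + 1) := by
              rw [← Finset.sum_div, Finset.sum_comm]
          _ ≤ (∑ i : Fin (d + 1), T i) / ((d : ℝ) + 1) := by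
              gcongr with i _
              exact pushNorm_le_inj (Rm i) β hβalt
      have stepA' : (∑ f : Fin (d + 2) → V', |(α' f : ℝ)|)
          ≤ (∑ i : Fin (d + 1), T' i) / ((d : ℝ) + 1) := by
        have h1 : ∀ f : Fin (d + 2) → V', |(α' f : ℝ)|
            ≤ (∑ i : Fin (d + 1), |((pushChain (Rm' i) β f : ℚ) : ℝ)|) / ((d : ℝ) + 1) := by
          intro f
          rw [hα'def]
          push_cast
          rw [abs_div, abs_of_pos hdR]
          gcongr
          exact Finset.abs_sum_le_sum_abs _ _
        calc (∑ f : Fin (d + 2) → V', |(α' f : ℝ)|)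
            ≤ ∑ f : Fin (d + 2) → V',
                (∑ i : Fin (d + 1), |((pushChain (Rm' i) β f : ℚ) : ℝ)|) / ((d : ℝ) + 1) :=
              Finset.sum_le_sum fun f _ => h1 f
          _ = (∑ i : Fin (d + 1), ∑ f : Fin (d + 2) → V',
                |((pushChain (Rm' i) β f : ℚ) : ℝ)|) / ((d : ℝ) + 1) := by
              rw [← Finset.sum_div, Finset.sum_comm]
          _ ≤ (∑ i : Fin (d + 1), T' i) / ((d : ℝ) + 1) := by
              gcongr with i _
              exact pushNorm_le_inj (Rm' i) β hβalt
      have stepB : (∑ i : Fin (d + 1), T i) + (∑ i : Fin (d + 1), T' i)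
          ≤ ((d : ℝ) + 1) * ∑ g : Fin (d + 2) → W, |(β g : ℝ)| := by
        rw [hTdef, hT'def]
        simp only
        rw [Finset.sum_comm, Finset.sum_comm
          (s := (Finset.univ : Finset (Fin (d + 1))))
          (t := (Finset.univ : Finset (Fin (d + 2) → W)))]
        rw [← Finset.sum_add_distrib, Finset.mul_sum]
        refine Finset.sum_le_sum fun g _ => ?_
        by_cases hginj : Function.Injective g
        · exact count_main_real hd vF vF' j j' hcover hmeet hmeet' Rm Rm'
            hRj hRn hR'j hR'n g hginj |(β g : ℝ)| (abs_nonneg _)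
        · have hβg : β g = 0 := hβalt.eq_zero_of_not_injective hginj
          rw [hβg]
          simp
      have hfinal := add_le_add stepA stepA'
      rw [← add_div] at hfinal
      refine le_trans hfinal ?_
      rw [div_le_iff₀ hdR, mul_comm]
      exact stepB
    -- conclude
    have hxS : normQ α ∈ S := by rw [hSdef]; exact ⟨α, hαalt, hαbd, rfl⟩
    have hxS' : normQ α' ∈ S' := by rw [hS'def]; exact ⟨α', hα'alt, hα'bd, rfl⟩
    have h1 : sInf S ≤ normQ α := csInf_le hbddS hxS
    have h2 : sInf S' ≤ normQ α' := csInf_le hbddS' hxS'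
    have h3 : normQ α + normQ α' ≤ normQ β := by
      unfold normQ
      rw [← add_div]
      gcongr
    linarith
  have ge1 : sInf S + sInf S' ≤ sInf S'' := le_csInf ⟨_, hmemS''⟩ key_ge
  rw [hVQ, hVQ', hVQ'']
  linarith
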